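/- arXiv:2206.00836 — 5 statements merged into one kernel-verified Lean document; each statement's English description precedes it below -/
import Mathlib

section
/- The chromatic number of the graph F_n^s is at least ⌈n/a⌉, where n = as + b with a ≥ 2 and 0 ≤ b ≤ s-1. -/
/-- Cyclic distance `min (|x-y|, n - |x-y|)` on `ℤ/nℤ` for `x, y ∈ {1,…,n}`. -/
def cdist (n x y : ℕ) : ℕ := min (max x y - min x y) (n - (max x y - min x y))

/-- The graph `F_n^s` on vertex set `[n] = {1,…,n}`: distinct `x, y` are adjacent
iff their cyclic distance is `< s`. -/
def Fgraph (n s : ℕ) : SimpleGraph ℕ :=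
  SimpleGraph.fromRel (fun x y => x ∈ Finset.Icc 1 n ∧ y ∈ Finset.Icc 1 n ∧ cdist n x y < s)

/-!
A colour class of `F_n^s` is a set of points on the `n`-cycle at pairwise cyclic distance at least
`s`. Two or more such points split the cycle into arcs of length at least `s`, so `k ≥ 2` of them
need `k * s ≤ n`. As `n = a * s + b < (a + 1) * s`, every colour class has at most `a` vertices,
whence `n ≤ a * χ`.
-/

open Finset

theorem Finset.card_mul_le_max'_sub_min'_add {s : ℕ} {T : Finset ℕ}
    (hsep : ∀ x ∈ T, ∀ y ∈ T, x < y → s ≤ y - x) (hT : T.Nonempty) :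
    #T * s ≤ T.max' hT - T.min' hT + s := by
  induction T using Finset.induction_on_max with
  | empty => simp at hT
  | insert x T hlt ih =>
    rcases T.eq_empty_or_nonempty with rfl | hne
    · simp
    have hx : x ∉ T := fun hx => (hlt x hx).false
    have hMx : T.max' hne < x := hlt _ (max'_mem T hne)
    have hmM : T.min' hne ≤ T.max' hne := min'_le_max' T hne
    have hgap : s ≤ x - T.max' hne :=
      hsep _ (mem_insert_of_mem (max'_mem T hne)) _ (mem_insert_self x T) hMx
    have hih := ih (fun y hy z hz => hsep y (mem_insert_of_mem hy) z (mem_insert_of_mem hz)) hne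
    rw [max'_insert _ _ hne, min'_insert _ _ hne, max_eq_left hMx.le,
      min_eq_right (hmM.trans hMx.le), card_insert_of_notMem hx, add_one_mul]
    omega

theorem card_mul_le_of_pairwise_le_cdist {n s : ℕ} {T : Finset ℕ}
    (hsep : (T : Set ℕ).Pairwise fun x y => s ≤ cdist n x y) (hT : 2 ≤ #T) :
    #T * s ≤ n := by
  rcases Nat.eq_zero_or_pos s with rfl | hs
  · simp
  have hne : T.Nonempty := card_pos.1 (by omega)
  have hlt : T.min' hne < T.max' hne := min'_lt_max'_of_card T (by omega)
  have hwrap := hsep (min'_mem T hne) (max'_mem T hne) hlt.ne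
  have hspan := card_mul_le_max'_sub_min'_add
    (fun x hx y hy hxy => (hsep hx hy hxy.ne).trans (by unfold cdist; omega)) hne
  dsimp only [cdist] at hwrap
  rw [max_eq_right hlt.le, min_eq_left hlt.le] at hwrap
  omega

theorem le_cdist_of_not_fgraph_adj {n s x y : ℕ} (hx : x ∈ Icc 1 n) (hy : y ∈ Icc 1 n)
    (hxy : x ≠ y) (h : ¬(Fgraph n s).Adj x y) : s ≤ cdist n x y := by
  by_contra hlt
  exact h ((SimpleGraph.fromRel_adj _ _ _).2 ⟨hxy, Or.inl ⟨hx, hy, by omega⟩⟩)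

theorem card_le_of_isIndepSet_fgraph {n s a : ℕ} (ha : 0 < a) (hn : n < (a + 1) * s)
    {T : Finset ℕ} (hT : T ⊆ Icc 1 n) (hind : (Fgraph n s).IsIndepSet T) : #T ≤ a := by
  by_contra! hcard
  have hsep : (T : Set ℕ).Pairwise fun x y => s ≤ cdist n x y :=
    fun x hx y hy hxy => le_cdist_of_not_fgraph_adj (hT hx) (hT hy) hxy (hind hx hy hxy)
  have := card_mul_le_of_pairwise_le_cdist hsep (by omega)
  have := Nat.mul_le_mul_right s (show a + 1 ≤ #T by omega)
  omega

theorem SimpleGraph.Colorable.card_le_mul {V : Type*} {G : SimpleGraph V} {S : Finset V}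
    {a m : ℕ} (hc : G.Colorable m) (hind : ∀ T ⊆ S, G.IsIndepSet (T : Set V) → #T ≤ a) :
    #S ≤ a * m := by
  obtain ⟨C⟩ := hc
  calc #S ≤ a * #(S.image C) :=
        card_le_mul_card_image S a fun c _ => hind _ (filter_subset _ _)
          ((C.isIndepSet_colorClass c).mono fun v hv => (mem_filter.1 hv).2)
    _ ≤ a * m := Nat.mul_le_mul_left a ((card_le_univ _).trans (Fintype.card_fin m).le)

/-- With `n = a*s + b`, `0 ≤ b ≤ s-1`, `a ≥ 2`: the chromatic number of
`F_n^s` is at least `⌈n/a⌉ = (n + a - 1) / a`. -/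
theorem stmt_4 (s a b n : ℕ) (hs : 2 ≤ s) (ha : 2 ≤ a) (hb : b ≤ s - 1)
    (hn : n = a * s + b) :
    (((n + a - 1) / a : ℕ) : ℕ∞) ≤ (Fgraph n s).chromaticNumber := by
  have hcap : n < (a + 1) * s := by rw [hn, add_one_mul]; omega
  rw [SimpleGraph.le_chromaticNumber_iff_colorable]
  intro m hm
  have hnm : n ≤ a * m := by
    simpa using hm.card_le_mul (S := Icc 1 n) fun T hT hind =>
      card_le_of_isIndepSet_fgraph (by omega) hcap hT hind
  exact_mod_cast (Nat.div_le_iff_le_mul_add_pred (by omega)).2 (by omega)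
end

section
/- The graph F_n^s admits a proper vertex coloring with ⌈n/a⌉ colors, where n = as + b with a ≥ 2 and 0 ≤ b ≤ s-1; hence χ(F_n^s) ≤ ⌈n/a⌉. -/
/-!
Cut the cycle `{0, …, n-1}` into the `a` arcs `[⌈i n / a⌉, ⌈(i+1) n / a⌉)`. Since `a s ≤ n`, every
arc has at least `s` points, and every arc has at most `⌈n / a⌉` points; by the Galois connection
between `i ↦ ⌈i n / a⌉` and `t ↦ ⌊t a / n⌋`, the point `t` lies in arc number `⌊t a / n⌋`.
Colour each point by its offset inside its arc. Two distinct points of the same colour lie in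
different arcs, so in each direction around the cycle a whole arc separates them, and their cyclic
distance is at least `s`.
-/

def arcStart (n a i : ℕ) : ℕ := (i * n) ⌈/⌉ a

def arcIndex (n a t : ℕ) : ℕ := t * a / n

def arcColor (n a t : ℕ) : ℕ := t - arcStart n a (arcIndex n a t)

section Arcs

variable {n a : ℕ}

theorem arcStart_le_iff (ha : 0 < a) (hn : 0 < n) {i t : ℕ} :
    arcStart n a i ≤ t ↔ i ≤ arcIndex n a t := by
  rw [arcStart, arcIndex, ceilDiv_le_iff_le_mul ha, Nat.le_div_iff_mul_le hn, mul_comm a]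

theorem arcStart_mono (ha : 0 < a) {i j : ℕ} (h : i ≤ j) :
    arcStart n a i ≤ arcStart n a j :=
  (gc_mul_ceilDiv ha).monotone_l (Nat.mul_le_mul_right n h)

theorem arcStart_self (ha : 0 < a) : arcStart n a a = n := by
  rw [arcStart, ← smul_eq_mul, smul_ceilDiv ha]

theorem arcStart_arcIndex_le (ha : 0 < a) (hn : 0 < n) (t : ℕ) :
    arcStart n a (arcIndex n a t) ≤ t :=
  (arcStart_le_iff ha hn).2 le_rfl

theorem lt_arcStart_arcIndex_succ (ha : 0 < a) (hn : 0 < n) (t : ℕ) :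
    t < arcStart n a (arcIndex n a t + 1) :=
  lt_of_not_ge fun h => by have := (arcStart_le_iff ha hn).1 h; omega

theorem arcIndex_lt (ha : 0 < a) {t : ℕ} (ht : t < n) : arcIndex n a t < a :=
  (Nat.div_lt_iff_lt_mul (by omega)).2 (by rw [mul_comm a]; exact Nat.mul_lt_mul_of_pos_right ht ha)

theorem arcStart_add_le_succ {s : ℕ} (ha : 0 < a) (hsn : a * s ≤ n) (i : ℕ) :
    arcStart n a i + s ≤ arcStart n a (i + 1) := by
  simp only [arcStart, Nat.ceilDiv_eq_add_pred_div]
  calc (i * n + a - 1) / a + s = (i * n + a - 1 + a * s) / a := (Nat.add_mul_div_left _ _ ha).symm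
    _ ≤ ((i + 1) * n + a - 1) / a := Nat.div_le_div_right (by rw [add_one_mul]; omega)

theorem arcStart_succ_le (ha : 0 < a) (i : ℕ) :
    arcStart n a (i + 1) ≤ arcStart n a i + n ⌈/⌉ a := by
  rw [arcStart, ceilDiv_le_iff_le_mul ha, mul_add, add_one_mul, ← smul_eq_mul a, ← smul_eq_mul a]
  exact add_le_add (le_smul_ceilDiv ha) (le_smul_ceilDiv ha)

theorem arcColor_lt (ha : 0 < a) (hn : 0 < n) (t : ℕ) : arcColor n a t < n ⌈/⌉ a := by
  have := arcStart_arcIndex_le ha hn t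
  have := lt_arcStart_arcIndex_succ ha hn t
  have := arcStart_succ_le ha (n := n) (arcIndex n a t)
  unfold arcColor
  omega

theorem separated_of_arcColor_eq {s t u : ℕ} (ha : 0 < a) (hsn : a * s ≤ n) (htu : t < u)
    (hu : u < n) (hc : arcColor n a t = arcColor n a u) : s ≤ u - t ∧ u - t + s ≤ n := by
  have hn : 0 < n := by omega
  have hti := arcStart_arcIndex_le ha hn t
  have huj := arcStart_arcIndex_le ha hn u
  have hja := arcIndex_lt ha hu
  unfold arcColor at hc
  set i := arcIndex n a t
  set j := arcIndex n a u
  obtain hij | hij : i < j ∨ j ≤ i := lt_or_ge i j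
  · have := arcStart_add_le_succ ha hsn i
    have := arcStart_mono (n := n) ha (Nat.add_one_le_of_lt hij)
    have := arcStart_add_le_succ ha hsn j
    have := arcStart_mono (n := n) ha (Nat.add_one_le_of_lt hja)
    have := arcStart_self (n := n) ha
    omega
  · have := arcStart_mono (n := n) ha hij
    omega

end Arcs

theorem cdist_comm (n x y : ℕ) : cdist n x y = cdist n y x := by
  rw [cdist, cdist, max_comm, min_comm x y]

theorem le_cdist_of_lt {n s x y : ℕ} (hxy : x < y) (h₁ : s ≤ y - x) (h₂ : y - x + s ≤ n) :
    s ≤ cdist n x y := by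
  rw [cdist, max_eq_right hxy.le, min_eq_left hxy.le]
  exact le_min h₁ (by omega)

theorem fgraph_adj {n s x y : ℕ} :
    (Fgraph n s).Adj x y ↔ x ≠ y ∧ x ∈ Finset.Icc 1 n ∧ y ∈ Finset.Icc 1 n ∧ cdist n x y < s := by
  rw [Fgraph, SimpleGraph.fromRel_adj, cdist_comm n y x]
  tauto

theorem fgraph_colorable {n s a : ℕ} (ha : 0 < a) (hn : 0 < n) (hsn : a * s ≤ n) :
    (Fgraph n s).Colorable (n ⌈/⌉ a) := by
  -- vertex `x ∈ [1, n]` is the point `x - 1` of the cycle `{0, …, n-1}`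
  refine ⟨.mk (fun x => ⟨arcColor n a (x - 1), arcColor_lt ha hn _⟩) ?_⟩
  suffices ∀ x y, x < y → (Fgraph n s).Adj x y → arcColor n a (x - 1) ≠ arcColor n a (y - 1) by
    intro x y hxy hc
    obtain hlt | hlt := lt_or_gt_of_ne (fgraph_adj.1 hxy).1
    · exact this x y hlt hxy (Fin.val_eq_of_eq hc)
    · exact this y x hlt hxy.symm (Fin.val_eq_of_eq hc).symm
  intro x y hlt hxy hc
  obtain ⟨-, hx, hy, hd⟩ := fgraph_adj.1 hxy
  rw [Finset.mem_Icc] at hx hy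
  obtain ⟨h₁, h₂⟩ := separated_of_arcColor_eq ha hsn (by omega) (by omega) hc
  exact (le_cdist_of_lt hlt (by omega) (by omega)).not_gt hd

theorem stmt_5_general (s a b n : ℕ) (hs : 2 ≤ s) (ha : 2 ≤ a)
    (hn : n = a * s + b) :
    (∃ f : ℕ → Fin ((n + a - 1) / a),
      ∀ x y : ℕ, (Fgraph n s).Adj x y → f x ≠ f y) ∧
    (Fgraph n s).chromaticNumber ≤ (((n + a - 1) / a : ℕ) : ℕ∞) := by
  have hsn : a * s ≤ n := by omega
  have hn0 : 0 < n := by nlinarith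
  have hcol : (Fgraph n s).Colorable ((n + a - 1) / a) := fgraph_colorable (by omega) hn0 hsn
  refine ⟨?_, hcol.chromaticNumber_le⟩
  obtain ⟨C⟩ := hcol
  exact ⟨C, fun _ _ h => C.valid h⟩

/-- With `n = a*s + b`, `0 ≤ b ≤ s-1`, `a ≥ 2`: `F_n^s` has a proper vertex
coloring with `⌈n/a⌉ = (n + a - 1) / a` colors; hence `χ(F_n^s) ≤ ⌈n/a⌉`. -/
theorem stmt_5 (s a b n : ℕ) (hs : 2 ≤ s) (ha : 2 ≤ a) (hb : b ≤ s - 1)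
    (hn : n = a * s + b) :
    (∃ f : ℕ → Fin ((n + a - 1) / a),
      ∀ x y : ℕ, (Fgraph n s).Adj x y → f x ≠ f y) ∧
    (Fgraph n s).chromaticNumber ≤ (((n + a - 1) / a : ℕ) : ℕ∞) :=
  stmt_5_general s a b n hs ha hn
end

section
/- Let r, s, l ≥ 2, n = ls(rs-1), and A = {ls, 2ls, ..., (rs-1)ls} ⊆ [n]. Let F be the hypergraph on [n] whose hyperedges are all s-element subsets of A together with all 2-element subsets {x,y} of [n] with min(|x-y|, n-|x-y|) < s. Then the s-colorability defect of F satisfies cd^s(F) ≥ r. -/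
/-- The `s`-colorability defect of a hypergraph `H` on `[n]`: the minimum size of a
set `W ⊆ [n]` such that `[n] \ W` can be partitioned into `s` parts (the fibers of a
coloring `f`), none of which contains a hyperedge of `H`. -/
noncomputable def cd (n s : ℕ) (H : Finset (Finset ℕ)) : ℕ :=
  sInf {k | ∃ W : Finset ℕ, W ⊆ Finset.Icc 1 n ∧ W.card = k ∧
    ∃ f : ℕ → Fin s, ∀ e ∈ H, ∀ c : Fin s,
      ¬ e ⊆ (Finset.Icc 1 n \ W).filter (fun v => f v = c)}

/-!
Index the points `A = {L, 2L, …, mL}` (with `L = ls`, `m = rs - 1`) cyclically by `ZMod m`, and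
call an index blocked when `W` meets the arc of length `L` following it; at most `|W|` indices are
blocked. On a stretch of `s + 1` consecutive points off `W`, the first `s` carry all `s` colours,
so the colouring is `s`-periodic there; as `s ∣ L`, consecutive points of `A \ W` separated by an
unblocked arc get the same colour. Thus the points of `A \ W` fall into at most `max |W| 1`
monochromatic runs, each of size `< s` because `s`-subsets of `A` are hyperedges, while at most
`|W|` points of `A` are missed. Hence `rs - 1 ≤ s · max |W| 1`, forcing `|W| ≥ r`.
-/

open Finset

-- `g` is injective on `a + [0, s)`, hence takes every value there, and `g (a + s)` avoids all
-- of these values except `g a`.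
theorem apply_eq_apply_add_of_ne {s : ℕ} (g : ℕ → Fin s) (a : ℕ)
    (hg : ∀ i j, a ≤ i → i < j → j ≤ a + s → j - i < s → g i ≠ g j) : g a = g (a + s) := by
  have hinj : Function.Injective fun t : Fin s => g (a + t) := by
    intro t t' h
    by_contra hne
    rcases lt_or_gt_of_ne (Fin.val_ne_of_ne hne) with hlt | hlt
    · exact hg _ _ (by omega) (by omega) (by omega) (by omega) h
    · exact hg _ _ (by omega) (by omega) (by omega) (by omega) h.symm
  obtain ⟨t, ht⟩ := Finite.injective_iff_surjective.mp hinj (g (a + s))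
  rcases Nat.eq_zero_or_pos t with h0 | hpos
  · simpa [h0] using ht
  · exact absurd ht (hg _ _ (by omega) (by omega) le_rfl (by omega))

theorem apply_zero_eq_apply_mul_of_ne {s : ℕ} (g : ℕ → Fin s) (N : ℕ)
    (hg : ∀ i j, i < j → j ≤ N → j - i < s → g i ≠ g j) :
    ∀ q, q * s ≤ N → g 0 = g (q * s)
  | 0, _ => by simp
  | q + 1, hq => by
    rw [apply_zero_eq_apply_mul_of_ne g N hg q (by nlinarith), add_one_mul]
    exact apply_eq_apply_add_of_ne g _ fun i j _ hij hj hji => hg i j hij (by nlinarith) hji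

section Runs

variable {m : ℕ} {α : Type*} (g : ZMod m → α) (B U : Finset (ZMod m))

theorem apply_sub_eq_of_forall_notMem (hU : ∀ i ∉ B, i + 1 ∈ U)
    (hg : ∀ i ∉ B, i ∈ U → g i = g (i + 1)) {u : ZMod m} (hu : u ∈ U) {d : ℕ}
    (hd : ∀ t < d, u - (t + 1) ∉ B) : ∀ t ≤ d, u - t ∈ U → g (u - t) = g u
  | 0, _, _ => by simp
  | t + 1, ht, hmem => by
    have hv : u - ((t + 1 : ℕ) : ZMod m) + 1 = u - t := by push_cast; ring
    have hvB : u - ((t + 1 : ℕ) : ZMod m) ∉ B := by push_cast; exact hd t (by omega)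
    rw [hg _ hvB hmem, hv]
    exact apply_sub_eq_of_forall_notMem hU hg hu hd t (by omega) (hv ▸ hU _ hvB)

-- Each `u ∈ U` is sent to the last element of `B` strictly before it (cyclically); on each
-- fiber, a run between consecutive elements of `B`, the value of `g` is constant.
theorem card_le_mul_card_of_runs [NeZero m] [DecidableEq α] (hB : B.Nonempty)
    (hU : ∀ i ∉ B, i + 1 ∈ U) (hg : ∀ i ∉ B, i ∈ U → g i = g (i + 1)) (c : ℕ)
    (hc : ∀ a, #{i ∈ U | g i = a} ≤ c) : #U ≤ c * #B := by
  obtain ⟨b, hb⟩ := hB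
  have hex : ∀ u : ZMod m, ∃ t : ℕ, u - (t + 1) ∈ B := fun u =>
    ⟨(u - b - 1).val, by rw [ZMod.natCast_zmod_val]; ring_nf; exact hb⟩
  let d u := Nat.find (hex u)
  have hrun : ∀ u ∈ U, ∀ t ≤ d u, u - t ∈ U → g (u - t) = g u := fun u hu =>
    apply_sub_eq_of_forall_notMem g B U hU hg hu fun t ht => Nat.find_min (hex u) ht
  refine card_le_mul_card_image_of_maps_to (f := fun u => u - (d u + 1))
    (fun u _ => Nat.find_spec (hex u)) c fun b' _ => ?_
  rcases Finset.eq_empty_or_nonempty {u ∈ U | u - (d u + 1) = b'} with he | ⟨u₀, hu₀⟩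
  · simp [he]
  refine le_trans (card_le_card fun u hu => ?_) (hc (g u₀))
  rw [mem_filter] at hu hu₀ ⊢
  refine ⟨hu.1, ?_⟩
  have heq : u - (d u + 1) = u₀ - (d u₀ + 1) := hu.2.trans hu₀.2.symm
  rcases le_total (d u) (d u₀) with h | h
  · have : u = u₀ - ((d u₀ - d u : ℕ) : ZMod m) := by
      push_cast [h]; linear_combination heq
    rw [this] at hu ⊢; exact hrun u₀ hu₀.1 _ (by omega) hu.1
  · have : u₀ = u - ((d u - d u₀ : ℕ) : ZMod m) := by
      push_cast [h]; linear_combination -heq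
    rw [this] at hu₀ ⊢; exact (hrun u hu.1 _ (by omega) hu₀.1).symm

theorem card_le_mul_max_card_of_runs [NeZero m] [DecidableEq α] (hU : ∀ i ∉ B, i + 1 ∈ U)
    (hg : ∀ i ∉ B, i ∈ U → g i = g (i + 1)) (c : ℕ) (hc : ∀ a, #{i ∈ U | g i = a} ≤ c) :
    #U ≤ c * max #B 1 := by
  rcases B.eq_empty_or_nonempty with rfl | hB
  · simpa using card_le_mul_card_of_runs g {0} U (singleton_nonempty 0)
      (fun i _ => hU i (notMem_empty i)) (fun i _ => hg i (notMem_empty i)) c hc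
  · rw [max_eq_left hB.card_pos]
    exact card_le_mul_card_of_runs g B U hB hU hg c hc

end Runs

def IsProperColoringOn {β α : Type*} [DecidableEq α] (H : Finset (Finset β)) (V : Finset β)
    (f : β → α) : Prop :=
  ∀ e ∈ H, ∀ c, ¬ e ⊆ V.filter (f · = c)

namespace IsProperColoringOn

variable {β α : Type*} [DecidableEq β] [DecidableEq α] {H : Finset (Finset β)} {V : Finset β}
  {f : β → α}

theorem apply_ne (hf : IsProperColoringOn H V f) {x y : β} (hx : x ∈ V) (hy : y ∈ V)
    (hxy : {x, y} ∈ H) : f x ≠ f y := fun heq => hf _ hxy (f x) fun z hz => by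
  rcases mem_insert.mp hz with rfl | hz
  · exact mem_filter.mpr ⟨hx, rfl⟩
  · rw [mem_singleton.mp hz]; exact mem_filter.mpr ⟨hy, heq.symm⟩

theorem card_filter_lt (hf : IsProperColoringOn H V f) {A : Finset β} {k : ℕ}
    (hA : A.powersetCard k ⊆ H) (c : α) : #{a ∈ A ∩ V | f a = c} < k := by
  by_contra! hk
  obtain ⟨e, he, hek⟩ := exists_subset_card_eq hk
  refine hf e (hA (mem_powersetCard.mpr ⟨fun a ha => ?_, hek⟩)) c fun a ha => ?_
  · exact mem_of_mem_inter_left (mem_filter.mp (he ha)).1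
  · obtain ⟨ha, hac⟩ := mem_filter.mp (he ha)
    exact mem_filter.mpr ⟨mem_of_mem_inter_right ha, hac⟩

end IsProperColoringOn

theorem le_cd {n s r : ℕ} {H : Finset (Finset ℕ)} (hs : 0 < s) (hH : ∅ ∉ H)
    (h : ∀ W ⊆ Icc 1 n, ∀ f : ℕ → Fin s, IsProperColoringOn H (Icc 1 n \ W) f → r ≤ #W) :
    r ≤ cd n s H := by
  refine le_csInf ⟨_, Icc 1 n, subset_rfl, rfl, fun _ => ⟨0, hs⟩, fun e he c he' => ?_⟩ ?_
  · rw [sdiff_self, bot_eq_empty, filter_empty, subset_empty] at he'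
    exact hH (he' ▸ he)
  · rintro k ⟨W, hW, rfl, f, hf⟩
    exact h W hW f hf

-- The point of `[1, n]` representing the residue of `x ∈ [0, n]` modulo `n`.
def cycRep (n x : ℕ) : ℕ := if x = 0 then n else x

theorem cycRep_mem_Icc {n x : ℕ} (hn : 0 < n) (hx : x ≤ n) : cycRep n x ∈ Icc 1 n := by
  unfold cycRep; split_ifs <;> simp only [mem_Icc] <;> omega

theorem cycRep_of_ne_zero {n x : ℕ} (hx : x ≠ 0) : cycRep n x = x := if_neg hx

theorem cdist_cycRep {n u v : ℕ} (huv : u < v) (hv : v ≤ n) (h : 2 * (v - u) ≤ n) :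
    cdist n (cycRep n u) (cycRep n v) = v - u := by
  unfold cdist cycRep; split_ifs <;> omega

theorem cycRep_val_add_one_mul {m : ℕ} [NeZero m] {L : ℕ} (hL : 0 < L) (i : ZMod m) :
    cycRep (L * m) ((i + 1).val * L) = i.val * L + L := by
  have hi := ZMod.val_lt i
  rw [ZMod.val_add, ZMod.val_one_eq_one_mod]
  unfold cycRep
  rcases Nat.lt_or_ge (i.val + 1) m with h | h
  · rw [Nat.mod_eq_of_lt (by omega : 1 < m), Nat.mod_eq_of_lt h, if_neg (by positivity)]
    ring
  · obtain rfl | hm := Nat.eq_or_lt_of_le (Nat.one_le_iff_ne_zero.mpr (NeZero.ne m))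
    · simp_all
    · have hm' : L * (i.val + 1) = L * m := by rw [(by omega : i.val + 1 = m)]
      rw [Nat.mod_eq_of_lt hm, (by omega : i.val + 1 = m), Nat.mod_self, zero_mul, if_pos rfl]
      linarith

theorem cycRep_val_mul_injective {m : ℕ} [NeZero m] {L : ℕ} (hL : 0 < L) :
    Function.Injective fun i : ZMod m => cycRep (L * m) (i.val * L) := by
  intro i j h
  have hi : i.val * L < L * m := by nlinarith [ZMod.val_lt i]
  have hj : j.val * L < L * m := by nlinarith [ZMod.val_lt j]
  simp only [cycRep] at h
  apply ZMod.val_injective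
  split_ifs at h with hi0 hj0 hj0
  · exact Nat.eq_of_mul_eq_mul_right hL (hi0.trans hj0.symm)
  · omega
  · omega
  · exact Nat.eq_of_mul_eq_mul_right hL h

theorem cycRep_val_mul_mem {m : ℕ} [NeZero m] {L : ℕ} (hL : 0 < L) (i : ZMod m) :
    cycRep (L * m) (i.val * L) ∈ (Icc 1 m).image (· * L) := by
  rw [mem_image]
  by_cases h : i.val = 0
  · exact ⟨m, by simp [Nat.one_le_iff_ne_zero, NeZero.ne m], by simp [cycRep, h, mul_comm]⟩
  · exact ⟨i.val, by simp [(ZMod.val_lt i).le, Nat.one_le_iff_ne_zero, h],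
      by simp [cycRep, h, hL.ne']⟩

theorem card_filter_exists_mem_le {m : ℕ} [NeZero m] {L : ℕ} (hL : 0 < L) (W : Finset ℕ) :
    #{i : ZMod m | ∃ t ∈ Icc 1 L, i.val * L + t ∈ W} ≤ #W := by
  calc _ ≤ #(W.image fun w => (((w - 1) / L : ℕ) : ZMod m)) := card_le_card ?_
    _ ≤ #W := card_image_le
  intro i hi
  simp only [mem_filter, mem_univ, true_and, mem_Icc] at hi
  obtain ⟨t, ⟨ht1, htL⟩, htW⟩ := hi
  refine mem_image.mpr ⟨_, htW, ?_⟩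
  rw [Nat.div_eq_of_lt_le (k := i.val) (by omega) (by rw [add_one_mul]; omega),
    ZMod.natCast_zmod_val]

theorem apply_cycRep_eq_of_arc {n s : ℕ} {W : Finset ℕ} {f : ℕ → Fin s}
    (hpair : ∀ x ∈ Icc 1 n \ W, ∀ y ∈ Icc 1 n \ W, x ≠ y → cdist n x y < s → f x ≠ f y)
    (hn : 2 * s ≤ n) {L : ℕ} (hsL : s ∣ L) {x : ℕ} (hx : x + L ≤ n)
    (hW : ∀ t ≤ L, cycRep n (x + t) ∉ W) : f (cycRep n x) = f (cycRep n (x + L)) := by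
  have hs := Fin.pos (f 0)
  obtain ⟨q, rfl⟩ := hsL
  have := apply_zero_eq_apply_mul_of_ne (fun t => f (cycRep n (x + t))) (s * q) ?_ q
    (by rw [mul_comm])
  · simpa [mul_comm] using this
  intro i j hij hj hji
  have hd := cdist_cycRep (n := n) (u := x + i) (v := x + j) (by omega) (by omega) (by omega)
  refine hpair _ (mem_sdiff.mpr ⟨cycRep_mem_Icc (by omega) (by omega), hW i (by omega)⟩)
    _ (mem_sdiff.mpr ⟨cycRep_mem_Icc (by omega) (by omega), hW j hj⟩) (fun heq => ?_) (by omega)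
  rw [heq] at hd
  simp only [cdist, max_self, min_self, Nat.sub_self, zero_le, min_eq_left] at hd
  omega

theorem le_mul_max_card_of_coloring {L m s : ℕ} (hm : 0 < m) (hL : 0 < L) (hsL : s ∣ L)
    (hn : 2 * s ≤ L * m) {W : Finset ℕ} {f : ℕ → Fin s}
    (hpair : ∀ x ∈ Icc 1 (L * m) \ W, ∀ y ∈ Icc 1 (L * m) \ W, x ≠ y →
      cdist (L * m) x y < s → f x ≠ f y)
    (hA : ∀ c, #{a ∈ (Icc 1 m).image (· * L) ∩ (Icc 1 (L * m) \ W) | f a = c} < s) :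
    m ≤ s * max #W 1 := by
  have : NeZero m := ⟨hm.ne'⟩
  have hs := Fin.pos (f 0)
  set P : ZMod m → ℕ := fun i => cycRep (L * m) (i.val * L)
  -- `A`-points are indexed by `ZMod m`; `i ∈ B` when `W` meets the arc `(P i, P (i + 1)]`.
  set B : Finset (ZMod m) := {i | ∃ t ∈ Icc 1 L, i.val * L + t ∈ W}
  set U : Finset (ZMod m) := {i | P i ∉ W}
  have hlt (i : ZMod m) : i.val * L + L ≤ L * m := by nlinarith [ZMod.val_lt i]
  have hfree (i : ZMod m) (hi : i ∉ B) (t : ℕ) (ht1 : 1 ≤ t) (ht : t ≤ L) :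
      i.val * L + t ∉ W := by
    simp only [B, mem_filter, mem_univ, true_and, not_exists, not_and] at hi
    exact hi t (mem_Icc.mpr ⟨ht1, ht⟩)
  have hU : ∀ i ∉ B, i + 1 ∈ U := by
    intro i hi
    simpa [U, P, cycRep_val_add_one_mul hL] using hfree i hi L hL le_rfl
  have hg : ∀ i ∉ B, i ∈ U → f (P i) = f (P (i + 1)) := by
    intro i hiB hiU
    have harc := apply_cycRep_eq_of_arc hpair hn hsL (hlt i) fun t ht => by
      rcases Nat.eq_zero_or_pos t with rfl | ht1
      · simpa [U] using hiU
      · rw [cycRep_of_ne_zero (by omega)]; exact hfree i hiB t ht1 ht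
    rwa [cycRep_of_ne_zero (by positivity : i.val * L + L ≠ 0),
      ← cycRep_val_add_one_mul hL] at harc
  have hc : ∀ c, #{i ∈ U | f (P i) = c} ≤ s - 1 := by
    intro c
    refine Nat.le_sub_one_of_lt (lt_of_le_of_lt (card_le_card_of_injOn P ?_
      (cycRep_val_mul_injective hL).injOn) (hA c))
    intro i hi
    rw [mem_coe, mem_filter] at hi ⊢
    have hPi : P i ∈ Icc 1 (L * m) :=
      cycRep_mem_Icc (by positivity) (by nlinarith [ZMod.val_lt i])
    exact ⟨mem_inter.mpr ⟨cycRep_val_mul_mem hL i, mem_sdiff.mpr ⟨hPi, (mem_filter.mp hi.1).2⟩⟩,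
      hi.2⟩
  have hcompl : #Bᶜ ≤ #U := card_le_card_of_injOn (· + 1)
    (fun i hi => hU i (by simpa using hi)) (add_left_injective 1).injOn
  rw [card_compl, ZMod.card] at hcompl
  have hruns := card_le_mul_max_card_of_runs (fun i => f (P i)) B U hU hg (s - 1) hc
  have hBW : #B ≤ #W := card_filter_exists_mem_le hL W
  calc m ≤ (s - 1) * max #B 1 + max #B 1 := by have := le_max_left #B 1; omega
    _ = s * max #B 1 := by rw [← add_one_mul, Nat.sub_add_cancel (by omega : 1 ≤ s)]
    _ ≤ s * max #W 1 := by gcongr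

/-- Let `r, s, l ≥ 2`, `n = l*s*(r*s - 1)` and `A = {ls, 2ls, …, (rs-1)ls}`. Let
`F` be the hypergraph on `[n]` whose hyperedges are all `s`-subsets of `A` together
with all pairs `{x, y} ⊆ [n]` at cyclic distance `< s` (the non-`s`-stable pairs).
Then `cd^s(F) ≥ r`. -/
theorem stmt_14 (r s l : ℕ) (hr : 2 ≤ r) (hs : 2 ≤ s) (hl : 2 ≤ l) :
    r ≤ cd (l * s * (r * s - 1)) s
      ((((Finset.Icc 1 (r * s - 1)).image (fun i => i * (l * s))).powersetCard s) ∪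
        ((Finset.Icc 1 (l * s * (r * s - 1))).powersetCard 2).filter
          (fun e => ∃ x ∈ e, ∃ y ∈ e, x ≠ y ∧ cdist (l * s * (r * s - 1)) x y < s)) := by
  have hm : 0 < r * s - 1 := by have := Nat.mul_le_mul hr hs; omega
  refine le_cd (by omega) (by simp [mem_powersetCard]; omega) fun W _ f hf => ?_
  have hbound := le_mul_max_card_of_coloring hm (by positivity) (dvd_mul_left s l)
    (by simpa using Nat.mul_le_mul (Nat.mul_le_mul_right s hl) hm)
    (fun x hx y hy hxy hd => hf.apply_ne hx hy (mem_union_right _ (mem_filter.mpr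
      ⟨mem_powersetCard.mpr ⟨insert_subset (mem_sdiff.mp hx).1
        (singleton_subset_iff.mpr (mem_sdiff.mp hy).1), card_pair hxy⟩,
        x, by simp, y, by simp, hxy, hd⟩)))
    (hf.card_filter_lt subset_union_left)
  by_contra! hW
  have hmax : s * max #W 1 ≤ s * (r - 1) := Nat.mul_le_mul_left s (max_le (by omega) (by omega))
  have : s * (r - 1) = r * s - s := by rw [Nat.mul_sub_one, mul_comm]
  omega
end

section
/- Let r ≥ 2, l ≥ 1, n = lr(2r-1). Let F be the graph on [n] whose edges are all pairs {x,y} with min(|x-y|, n-|x-y|) < r, together with all pairs {a·lr, b·lr} for distinct a, b in {1,...,2r-1}. Then the r-colorability defect of F satisfies cd^r(F) ≥ r. -/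
/-- The `r`-colorability defect of a graph `G` on `[n]`: the minimum size of a set
`W ⊆ [n]` such that the induced subgraph of `G` on `[n] \ W` is properly
`r`-colorable. -/
noncomputable def cdG (n r : ℕ) (G : SimpleGraph ℕ) : ℕ :=
  sInf {k | ∃ W : Finset ℕ, W ⊆ Finset.Icc 1 n ∧ W.card = k ∧
    ∃ f : ℕ → Fin r, ∀ x ∈ Finset.Icc 1 n \ W, ∀ y ∈ Finset.Icc 1 n \ W,
      G.Adj x y → f x ≠ f y}

/-- The graph on `[n]` (with `n = l*r*(2r-1)`) whose edges are the pairs at cyclic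
distance `< r` together with all pairs `{a·lr, b·lr}` for distinct
`a, b ∈ {1,…,2r-1}`. -/
def Fbig (l r : ℕ) : SimpleGraph ℕ :=
  SimpleGraph.fromRel (fun x y =>
    x ∈ Finset.Icc 1 (l * r * (2 * r - 1)) ∧ y ∈ Finset.Icc 1 (l * r * (2 * r - 1)) ∧
      (cdist (l * r * (2 * r - 1)) x y < r ∨
        ∃ a ∈ Finset.Icc 1 (2 * r - 1), ∃ b ∈ Finset.Icc 1 (2 * r - 1),
          a ≠ b ∧ x = a * (l * r) ∧ y = b * (l * r)))

/-!
Put `m = l (2r - 1)`, so that `n = m r`. The `2r - 1` special vertices `a l r` form a clique, so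
deleting fewer than `r` vertices leaves at least `r` of them: they use up all `r` colours, and some
special vertex `w` is deleted. A colour class is an independent set of the `(r - 1)`-st power of
the `n`-cycle, so it meets each of `m` consecutive arcs of length `r` at most once; if it has
`m` points, then with every point `x` it contains `x + r`, i.e. it is a residue class modulo `r`.
Every class contains a special vertex, a multiple of `r`, but misses the multiple `w` of `r`, so
it has at most `m - 1` points, and the `r` classes cover at most `n - r` vertices.
-/

open Finset

section CyclicallySpaced

variable {n : ℕ} [NeZero n] {r m : ℕ} {T : Finset (ZMod n)}

/-- Independent sets of the `(r - 1)`-st power of the cycle on `ZMod n`. -/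
def CyclicallySpaced (r : ℕ) (T : Finset (ZMod n)) : Prop :=
  ∀ x ∈ T, ∀ y ∈ T, x ≠ y → r ≤ (y - x).val

namespace CyclicallySpaced

variable (hT : CyclicallySpaced r T) (hn : n = m * r)
include hT hn

theorem exists_mem_val_sub_lt (hm : m ≤ #T) (s : ZMod n) : ∃ y ∈ T, (y - s).val < r := by
  have hmr : 0 < m * r := hn ▸ Nat.pos_of_neZero n
  have hr : 0 < r := Nat.pos_of_mul_pos_left hmr
  set arc : ZMod n → ℕ := fun y => (y - s).val / r
  have harc : Set.InjOn arc T := by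
    intro x hx y hy hxy
    by_contra hne
    wlog hle : (x - s).val ≤ (y - s).val generalizing x y
    · exact this hy hx hxy.symm (Ne.symm hne) (by omega)
    have hsub : (y - x).val = (y - s).val - (x - s).val := by
      rw [← ZMod.val_sub hle, sub_sub_sub_cancel_right]
    have hspaced := hT x hx y hy hne
    have := Nat.div_add_mod (x - s).val r
    have := Nat.div_add_mod (y - s).val r
    have := Nat.mod_lt (x - s).val hr
    have := Nat.mod_lt (y - s).val hr
    simp only [arc] at hxy
    rw [hxy] at *
    omega
  have himage : T.image arc = range m := by
    refine eq_of_subset_of_card_le (fun j hj => ?_) ?_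
    · obtain ⟨y, -, rfl⟩ := mem_image.1 hj
      exact mem_range.2 ((Nat.div_lt_iff_lt_mul hr).2 (hn ▸ (y - s).val_lt))
    · rwa [card_image_of_injOn harc, card_range]
  obtain ⟨y, hy, hy0⟩ := mem_image.1 (himage ▸ mem_range.2 (Nat.pos_of_mul_pos_right hmr))
  exact ⟨y, hy, by simpa [arc, Nat.div_eq_zero_iff, hr.ne'] using hy0⟩

/-- The point of `T` in the arc of length `r` right after `x ∈ T` can only be `x + r`. -/
theorem add_mem (hm : m ≤ #T) (hrn : r < n) {x : ZMod n} (hx : x ∈ T) : x + r ∈ T := by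
  obtain ⟨y, hy, hlt⟩ := hT.exists_mem_val_sub_lt hn hm (x + 1)
  set d := (y - (x + 1)).val
  have hyx : y - x = ((d + 1 : ℕ) : ZMod n) := by
    rw [Nat.cast_succ, ZMod.natCast_zmod_val]; ring
  have hval : (y - x).val = d + 1 := by rw [hyx, ZMod.val_natCast_of_lt (by omega)]
  have hne : x ≠ y := by rintro rfl; simp at hval
  have hd : d + 1 = r := le_antisymm (by omega) (hval ▸ hT x hx y hy hne)
  have hyr : y = x + r := by rw [← hd, ← hyx]; ring
  exact hyr ▸ hy

theorem add_natCast_mul_mem (hm : m ≤ #T) (hrn : r < n) {x : ZMod n} (hx : x ∈ T) (j : ℕ) :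
    x + j * r ∈ T := by
  induction j with
  | zero => simpa
  | succ j ih => simpa [add_mul, add_assoc] using hT.add_mem hn hm hrn ih

theorem card_lt (hrn : r < n) {x c : ZMod n} (hx : x ∈ T) (hc : x + c * r ∉ T) : #T < m := by
  by_contra! hm
  exact hc (by simpa using hT.add_natCast_mul_mem hn hm hrn hx c.val)

end CyclicallySpaced

end CyclicallySpaced

theorem cdist_le_val_natCast_sub {n x y : ℕ} [NeZero n] (hx : x ∈ Icc 1 n) (hy : y ∈ Icc 1 n) :
    cdist n x y ≤ ((y : ZMod n) - x).val := by
  rw [mem_Icc] at hx hy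
  have hval : (((y : ZMod n) - x).val : ℤ) = if x ≤ y then (y : ℤ) - x else (y : ℤ) - x + n := by
    rw [show (y : ZMod n) - x = ((y - x : ℤ) : ZMod n) by push_cast; rfl, ZMod.val_intCast]
    split_ifs
    · apply Int.emod_eq_of_lt <;> omega
    · rw [← Int.add_emod_right]
      apply Int.emod_eq_of_lt <;> omega
  unfold cdist
  split_ifs at hval <;> omega

theorem natCast_injOn_Icc {n : ℕ} [NeZero n] : Set.InjOn ((↑) : ℕ → ZMod n) (Icc 1 n) := by
  intro x hx y hy hxy
  by_contra hne
  rw [mem_coe] at hx hy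
  have hpos : 0 < cdist n x y := by
    rw [mem_Icc] at hx hy
    unfold cdist
    omega
  have := cdist_le_val_natCast_sub hx hy
  rw [hxy, sub_self, ZMod.val_zero] at this
  omega

theorem card_lt_of_le_cdist {n r m : ℕ} {T : Finset ℕ} (hn : n = m * r) (hrn : r < n)
    (hTn : T ⊆ Icc 1 n) (hT : ∀ x ∈ T, ∀ y ∈ T, x ≠ y → r ≤ cdist n x y) {p w : ℕ}
    (hp : p ∈ T) (hw : w ∈ Icc 1 n) (hwT : w ∉ T) (hpr : r ∣ p) (hwr : r ∣ w) : #T < m := by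
  have : NeZero n := ⟨by omega⟩
  have hinj : Set.InjOn ((↑) : ℕ → ZMod n) T := natCast_injOn_Icc.mono hTn
  have hspaced : CyclicallySpaced r (T.image ((↑) : ℕ → ZMod n)) := by
    simp only [CyclicallySpaced, mem_image]
    rintro _ ⟨x, hx, rfl⟩ _ ⟨y, hy, rfl⟩ hne
    exact (hT x hx y hy (ne_of_apply_ne _ hne)).trans
      (cdist_le_val_natCast_sub (hTn hx) (hTn hy))
  obtain ⟨a, rfl⟩ := hpr
  obtain ⟨b, rfl⟩ := hwr
  rw [← card_image_of_injOn hinj]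
  refine hspaced.card_lt hn hrn (mem_image_of_mem _ hp) (c := (b - a : ZMod n)) fun hmem => ?_
  obtain ⟨y, hy, hyw⟩ := mem_image.1 hmem
  have hyb : y = r * b := natCast_injOn_Icc (hTn hy) hw (by rw [hyw]; push_cast; ring)
  exact hwT (hyb ▸ hy)

section Coloring

variable {α β : Type*} [DecidableEq α] [Fintype β] {S W : Finset α} {f : α → β}

theorem exists_mem_sdiff_eq_of_injOn (hf : Set.InjOn f ↑(S \ W))
    (hS : Fintype.card β + #W ≤ #S) (c : β) : ∃ p ∈ S \ W, f p = c := by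
  have hcard : #(univ : Finset β) ≤ #(S \ W) := by
    have := le_card_sdiff W S
    rw [card_univ]
    omega
  obtain ⟨p, hp, hpc⟩ := surj_on_of_inj_on_of_card_le (fun x _ => f x) (fun _ _ => mem_univ _)
    (fun _ _ ha hb h => hf ha hb h) hcard c (mem_univ c)
  exact ⟨p, hp, hpc.symm⟩

theorem inter_nonempty_of_injOn (hf : Set.InjOn f ↑(S \ W)) (hS : Fintype.card β < #S) :
    (S ∩ W).Nonempty := by
  by_contra hSW
  rw [not_nonempty_iff_eq_empty, ← disjoint_iff_inter_eq_empty] at hSW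
  have := card_le_card_of_injOn f (fun x _ => mem_coe.2 (mem_univ (f x))) hf
  rw [hSW.sdiff_eq_left, card_univ] at this
  omega

end Coloring

namespace Fbig

variable {l r : ℕ}

def specials (l r : ℕ) : Finset ℕ := (Icc 1 (2 * r - 1)).image (· * (l * r))

theorem card_specials (hl : 1 ≤ l) (hr : 1 ≤ r) : #(specials l r) = 2 * r - 1 := by
  rw [specials, card_image_of_injective _ (mul_left_injective₀ (mul_ne_zero (by omega) (by omega))),
    Nat.card_Icc]
  omega

theorem specials_subset (hl : 1 ≤ l) (hr : 1 ≤ r) :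
    specials l r ⊆ Icc 1 (l * r * (2 * r - 1)) := by
  simp only [specials, image_subset_iff, mem_Icc]
  intro a ha
  constructor
  · exact Nat.mul_pos (by omega) (Nat.mul_pos (by omega) (by omega))
  · rw [mul_comm (l * r)]; exact Nat.mul_le_mul_right _ ha.2

theorem dvd_of_mem_specials {x : ℕ} (hx : x ∈ specials l r) : r ∣ x := by
  obtain ⟨a, -, rfl⟩ := mem_image.1 hx
  exact ⟨a * l, by ring⟩

theorem adj_of_cdist_lt {x y : ℕ} (hx : x ∈ Icc 1 (l * r * (2 * r - 1)))
    (hy : y ∈ Icc 1 (l * r * (2 * r - 1))) (hxy : x ≠ y)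
    (h : cdist (l * r * (2 * r - 1)) x y < r) : (Fbig l r).Adj x y := by
  simp only [Fbig, SimpleGraph.fromRel_adj]
  exact ⟨hxy, Or.inl ⟨hx, hy, Or.inl h⟩⟩

theorem adj_of_mem_specials (hl : 1 ≤ l) (hr : 1 ≤ r) {x y : ℕ} (hx : x ∈ specials l r)
    (hy : y ∈ specials l r) (hxy : x ≠ y) : (Fbig l r).Adj x y := by
  obtain ⟨a, ha, rfl⟩ := mem_image.1 hx
  obtain ⟨b, hb, rfl⟩ := mem_image.1 hy
  simp only [Fbig, SimpleGraph.fromRel_adj]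
  exact ⟨hxy, Or.inl ⟨specials_subset hl hr hx, specials_subset hl hr hy,
    Or.inr ⟨a, ha, b, hb, fun hab => hxy (hab ▸ rfl), rfl, rfl⟩⟩⟩

section Coloring

variable (hr : 2 ≤ r) (hl : 1 ≤ l) {W : Finset ℕ} {f : ℕ → Fin r}
  (hf : ∀ x ∈ Icc 1 (l * r * (2 * r - 1)) \ W, ∀ y ∈ Icc 1 (l * r * (2 * r - 1)) \ W,
    (Fbig l r).Adj x y → f x ≠ f y)
include hr hl hf

theorem injOn_specials_sdiff : Set.InjOn f ↑(specials l r \ W) := by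
  intro x hx y hy hfxy
  by_contra hne
  rw [coe_sdiff, Set.mem_sdiff] at hx hy
  have hSn := specials_subset hl (by omega : 1 ≤ r)
  exact hf x (mem_sdiff.2 ⟨hSn hx.1, hx.2⟩) y (mem_sdiff.2 ⟨hSn hy.1, hy.2⟩)
    (adj_of_mem_specials hl (by omega) hx.1 hy.1 hne) hfxy

theorem card_colorClass_lt {p w : ℕ} (hp : p ∈ specials l r \ W) (hw : w ∈ specials l r ∩ W) :
    #{x ∈ Icc 1 (l * r * (2 * r - 1)) \ W | f x = f p} < l * (2 * r - 1) := by
  have hn : l * r * (2 * r - 1) = l * (2 * r - 1) * r := by ring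
  have hrn : r < l * r * (2 * r - 1) := by
    have : 2 * r - 1 ≤ l * (2 * r - 1) := Nat.le_mul_of_pos_left _ hl
    rw [hn]
    nlinarith [show 3 ≤ l * (2 * r - 1) by omega]
  have hSn := specials_subset hl (by omega : 1 ≤ r)
  obtain ⟨hpS, hpW⟩ := mem_sdiff.1 hp
  obtain ⟨hwS, hwW⟩ := mem_inter.1 hw
  refine card_lt_of_le_cdist hn hrn ((filter_subset _ _).trans sdiff_subset) ?_
    (mem_filter.2 ⟨mem_sdiff.2 ⟨hSn hpS, hpW⟩, rfl⟩) (hSn hwS)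
    (fun hw => (mem_sdiff.1 (mem_filter.1 hw).1).2 hwW)
    (dvd_of_mem_specials hpS) (dvd_of_mem_specials hwS)
  intro x hx y hy hne
  by_contra! hlt
  rw [mem_filter] at hx hy
  exact hf x hx.1 y hy.1 (adj_of_cdist_lt (mem_sdiff.1 hx.1).1 (mem_sdiff.1 hy.1).1 hne hlt)
    (hx.2.trans hy.2.symm)

theorem le_card_of_coloring (hW : W ⊆ Icc 1 (l * r * (2 * r - 1))) : r ≤ #W := by
  by_contra! hWr
  have hS : #(specials l r) = 2 * r - 1 := card_specials hl (by omega)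
  have hinj := injOn_specials_sdiff hr hl hf
  obtain ⟨w, hw⟩ := inter_nonempty_of_injOn hinj (by rw [Fintype.card_fin]; omega)
  have hclass (c : Fin r) :
      #{x ∈ Icc 1 (l * r * (2 * r - 1)) \ W | f x = c} ≤ l * (2 * r - 1) - 1 := by
    obtain ⟨p, hp, rfl⟩ := exists_mem_sdiff_eq_of_injOn hinj (by rw [Fintype.card_fin]; omega) c
    exact Nat.le_sub_one_of_lt (card_colorClass_lt hr hl hf hp hw)
  have hcount := card_eq_sum_card_fiberwise (s := Icc 1 (l * r * (2 * r - 1)) \ W)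
    (t := univ) fun x _ => mem_univ (f x)
  have hbound := sum_le_sum fun c (_ : c ∈ univ) => hclass c
  rw [← hcount, card_sdiff_of_subset hW, Nat.card_Icc, sum_const, card_univ, Fintype.card_fin,
    smul_eq_mul] at hbound
  have hm : 1 ≤ l * (2 * r - 1) := Nat.mul_pos (by omega) (by omega)
  have hn : r * (l * (2 * r - 1) - 1) + r = l * r * (2 * r - 1) := by
    zify [hm, (by omega : 1 ≤ 2 * r)]
    ring
  omega

end Coloring

end Fbig

/-- For `r ≥ 2`, `l ≥ 1`, `n = l*r*(2r-1)`: the graph `F` above satisfies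
`cd^r(F) ≥ r`. -/
theorem stmt_15 (r l : ℕ) (hr : 2 ≤ r) (hl : 1 ≤ l) :
    r ≤ cdG (l * r * (2 * r - 1)) r (Fbig l r) :=
  le_csInf ⟨_, Icc 1 _, subset_rfl, rfl, fun _ => ⟨0, by omega⟩, by simp⟩
    fun _ ⟨_, hW, hk, _, hf⟩ => hk ▸ Fbig.le_card_of_coloring hr hl hf hW
end

section
/- Let r > s - 1 ≥ 1 and let G be a hypergraph on [n]. If the Kneser hypergraph KG^r(G_{s-stable}) has chromatic number t, then the Kneser hypergraph KG^r(G_{almost s-stable}) has chromatic number at most t + 1. -/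
/-- The sub-hypergraph of `G` consisting of its `s`-stable hyperedges (any two
distinct elements at cyclic distance `≥ s`). -/
def stablePart (n s : ℕ) (G : Finset (Finset ℕ)) : Finset (Finset ℕ) :=
  G.filter (fun e => ∀ x ∈ e, ∀ y ∈ e, x ≠ y → s ≤ cdist n x y)

/-- The sub-hypergraph of `G` consisting of its almost `s`-stable hyperedges (any
two elements `x < y` satisfy `y - x ≥ s`; no wraparound condition). -/
def almostStablePart (s : ℕ) (G : Finset (Finset ℕ)) : Finset (Finset ℕ) :=
  G.filter (fun e => ∀ x ∈ e, ∀ y ∈ e, x < y → s ≤ y - x)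

/-- The chromatic number of the Kneser hypergraph `KG^r(H)`: the least `m` such
that the hyperedges of `H` can be colored with `m` colors so that no `r` pairwise
disjoint hyperedges of `H` all receive the same color. -/
noncomputable def kgChrom (r : ℕ) (H : Finset (Finset ℕ)) : ℕ :=
  sInf {m | ∃ f : Finset ℕ → ℕ, (∀ e ∈ H, f e < m) ∧
    ∀ A : Finset (Finset ℕ), A ⊆ H → A.card = r →
      (∀ e ∈ A, ∀ e' ∈ A, e ≠ e' → Disjoint e e') → ¬ ∃ c, ∀ e ∈ A, f e = c}

/-! An almost `s`-stable set in `[n]` that is not `s`-stable can only fail cyclically, across the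
wraparound, so it contains an element of `{1, …, s - 1}`. Hence an `s`-stable Kneser coloring
extends to the almost `s`-stable hyperedges by one new color: a monochromatic `r`-family in the
new color would consist of `r` pairwise disjoint sets all meeting `{1, …, s - 1}`, while
`s - 1 < r`. -/

open Finset

def IsKneserColoring (r : ℕ) (H : Finset (Finset ℕ)) (m : ℕ) (f : Finset ℕ → ℕ) : Prop :=
  (∀ e ∈ H, f e < m) ∧
    ∀ A : Finset (Finset ℕ), A ⊆ H → A.card = r →
      (∀ e ∈ A, ∀ e' ∈ A, e ≠ e' → Disjoint e e') → ¬ ∃ c, ∀ e ∈ A, f e = c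

lemma kgChrom_eq_sInf (r : ℕ) (H : Finset (Finset ℕ)) :
    kgChrom r H = sInf {m | ∃ f, IsKneserColoring r H m f} := rfl

lemma IsKneserColoring.mono {r m : ℕ} {H H' : Finset (Finset ℕ)} {f : Finset ℕ → ℕ}
    (hf : IsKneserColoring r H' m f) (hsub : H ⊆ H') : IsKneserColoring r H m f :=
  ⟨fun e he => hf.1 e (hsub he), fun A hA => hf.2 A (hA.trans hsub)⟩

lemma kgChrom_le_succ_of_extend {r : ℕ} {H H' : Finset (Finset ℕ)} (hsub : H ⊆ H')
    (hext : ∀ m f, IsKneserColoring r H m f → ∃ g, IsKneserColoring r H' (m + 1) g) :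
    kgChrom r H' ≤ kgChrom r H + 1 := by
  rw [kgChrom_eq_sInf, kgChrom_eq_sInf]
  by_cases hH : {m | ∃ f, IsKneserColoring r H m f}.Nonempty
  · obtain ⟨f, hf⟩ := Nat.sInf_mem hH
    exact Nat.sInf_le (hext _ f hf)
  · have hH' : {m | ∃ g, IsKneserColoring r H' m g} = ∅ :=
      Set.eq_empty_of_forall_notMem fun m ⟨g, hg⟩ => hH ⟨m, g, hg.mono hsub⟩
    -- `sInf ∅ = 0`
    simp [hH']

lemma card_le_card_of_pairwiseDisjoint_of_forall_meets {α : Type*} {A : Finset (Finset α)}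
    {T : Finset α} (hdisj : ∀ e ∈ A, ∀ e' ∈ A, e ≠ e' → Disjoint e e')
    (hmeet : ∀ e ∈ A, ∃ x ∈ T, x ∈ e) : A.card ≤ T.card :=
  card_le_card_of_forall_subsingleton (fun e x => x ∈ e) hmeet
    fun x _ e ⟨he, hxe⟩ e' ⟨he', hxe'⟩ => by
      by_contra hne
      exact disjoint_left.mp (hdisj e he e' he' hne) hxe hxe'

lemma cdist_le_sub {n x y : ℕ} (hxy : x < y) : cdist n x y ≤ y - x := by
  unfold cdist
  omega

lemma stablePart_subset_almostStablePart {n s : ℕ} {G : Finset (Finset ℕ)} :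
    stablePart n s G ⊆ almostStablePart s G :=
  monotone_filter_right G fun _ _ hstab x hx y hy hxy =>
    (hstab x hx y hy hxy.ne).trans (cdist_le_sub hxy)

lemma exists_mem_Icc_of_mem_almostStablePart_of_notMem_stablePart {n s : ℕ}
    {G : Finset (Finset ℕ)} (hG : ∀ e ∈ G, e ⊆ Icc 1 n) {e : Finset ℕ}
    (ha : e ∈ almostStablePart s G) (hns : e ∉ stablePart n s G) :
    ∃ x ∈ Icc 1 (s - 1), x ∈ e := by
  obtain ⟨heG, halmost⟩ := mem_filter.mp ha
  have hstab : ¬ ∀ x ∈ e, ∀ y ∈ e, x ≠ y → s ≤ cdist n x y := fun h =>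
    hns (mem_filter.mpr ⟨heG, h⟩)
  push Not at hstab
  obtain ⟨x, hx, y, hy, hxy, hcdist⟩ := hstab
  have hxn := mem_Icc.mp (hG e heG hx)
  have hyn := mem_Icc.mp (hG e heG hy)
  unfold cdist at hcdist
  rcases hxy.lt_or_gt with hlt | hlt
  · have := halmost x hx y hy hlt
    exact ⟨x, mem_Icc.mpr ⟨hxn.1, by omega⟩, hx⟩
  · have := halmost y hy x hx hlt
    exact ⟨y, mem_Icc.mpr ⟨hyn.1, by omega⟩, hy⟩

lemma IsKneserColoring.extend_almostStablePart {n r s m : ℕ} {G : Finset (Finset ℕ)}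
    (hG : ∀ e ∈ G, e ⊆ Icc 1 n) (hr : s - 1 < r) {f : Finset ℕ → ℕ}
    (hf : IsKneserColoring r (stablePart n s G) m f) :
    IsKneserColoring r (almostStablePart s G) (m + 1)
      (fun e => if e ∈ stablePart n s G then f e else m) := by
  refine ⟨fun e _ => ?_, fun A hA hcard hdisj ⟨c, hc⟩ => ?_⟩
  · dsimp only
    split_ifs with he
    · exact Nat.lt_succ_of_lt (hf.1 e he)
    · exact Nat.lt_succ_self m
  by_cases hcm : c < m
  · have hAstable : A ⊆ stablePart n s G := fun e he => by
      by_contra hns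
      have hce : m = c := by simpa [hns] using hc e he
      omega
    refine hf.2 A hAstable hcard hdisj ⟨c, fun e he => ?_⟩
    simpa [hAstable he] using hc e he
  · have hmeet : ∀ e ∈ A, ∃ x ∈ Icc 1 (s - 1), x ∈ e := fun e he => by
      refine exists_mem_Icc_of_mem_almostStablePart_of_notMem_stablePart hG (hA he) fun hs => ?_
      have hce : f e = c := by simpa [hs] using hc e he
      have := hf.1 e hs
      omega
    have hrs := card_le_card_of_pairwiseDisjoint_of_forall_meets hdisj hmeet
    rw [hcard, Nat.card_Icc] at hrs
    omega

theorem stmt_18_general (n r s t : ℕ) (hr : s - 1 < r)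
    (G : Finset (Finset ℕ)) (hG : ∀ e ∈ G, e ⊆ Finset.Icc 1 n)
    (ht : kgChrom r (stablePart n s G) = t) :
    kgChrom r (almostStablePart s G) ≤ t + 1 := by
  subst ht
  exact kgChrom_le_succ_of_extend stablePart_subset_almostStablePart
    fun _ _ hf => ⟨_, hf.extend_almostStablePart hG hr⟩

/-- Let `r > s - 1 ≥ 1` and `G` a hypergraph on `[n]`. If `χ(KG^r(G_{s-stable})) = t`,
then `χ(KG^r(G_{almost s-stable})) ≤ t + 1`. -/
theorem stmt_18 (n r s t : ℕ) (hs : 2 ≤ s) (hr : s - 1 < r)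
    (G : Finset (Finset ℕ)) (hG : ∀ e ∈ G, e ⊆ Finset.Icc 1 n)
    (ht : kgChrom r (stablePart n s G) = t) :
    kgChrom r (almostStablePart s G) ≤ t + 1 :=
  stmt_18_general n r s t hr G hG ht
end
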